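/- Let Ω ⊆ ℝ² be open and connected, let q : Ω → ℝ be smooth and nowhere vanishing with q_x, q_y, q_xx, q_yy, q_xy all nowhere vanishing on Ω, let a, a₀, b, b₀, λ ∈ ℝ, set A(x) = a x² + a₀ and B(y) = b y² + b₀, and suppose there exist smooth Sˣ, Sʸ : Ω → ℝ such that on Ω: (E1) ∂_y Sˣ + ∂_x Sʸ = 4 q_x q_y; (E2) ∂_x Sˣ = 2 q_x²; (E3) ∂_y Sʸ = 2 q_y²; (E4) A''(x) − (Sˣ/q²) A'(x) = B''(y) − (Sʸ/q²) B'(y) (common value denoted w); (E5) −λ/q² = (1/2) w − (q_x A' + q_xx A + q_y B' + q_yy B)/q + (q_x² A + q_y² B)/q² + (Sˣ q_x A + Sʸ q_y B)/q³. Then a + b = 0. -/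

import Mathlib

open Real Set

/-- Partial derivative in the first variable. -/
noncomputable def px (f : ℝ × ℝ → ℝ) : ℝ × ℝ → ℝ :=
  fun p => deriv (fun t => f (t, p.2)) p.1

/-- Partial derivative in the second variable. -/
noncomputable def py (f : ℝ × ℝ → ℝ) : ℝ × ℝ → ℝ :=
  fun p => deriv (fun t => f (p.1, t)) p.2

/-!
Differentiating (E1)–(E3) once more and using the symmetry of mixed partials of `q`, `Sˣ`, `Sʸ`
gives `∂ₓ∂ₓSʸ = 4 q_xx q_y` and `∂_y∂ₓSʸ = 4 q_y q_xy`; comparing the two third derivatives of `Sʸ`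
then forces the Hessian of `q` to be degenerate, `q_xx q_yy = q_xy²`.

For quadratic `A` and `B`, (E4) becomes `(a - b) q² = a x Sˣ - b y Sʸ`. Differentiating this twice
in `x`, respectively twice in `y`, and eliminating the derivatives of `Sˣ`, `Sʸ` with (E1)–(E3)
and the formulas above gives `q_xx T = (a + b) q_x²` and `q_yy T = -(a + b) q_y²` with
`T = (a - b) q - 2 a x q_x + 2 b y q_y`. Multiplying,
`-(a + b)² q_x² q_y² = q_xx q_yy T² = q_xy² T² ≥ 0`, so `a + b = 0` because `q_x q_y ≠ 0`.
-/

open Filter Topology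
open scoped ContDiff

section PartialDerivatives

variable {f u v : ℝ × ℝ → ℝ} {p : ℝ × ℝ} {Ω : Set (ℝ × ℝ)} {n : WithTop ℕ∞}

theorem hasDerivAt_fst_slice (hf : DifferentiableAt ℝ f p) :
    HasDerivAt (fun t => f (t, p.2)) (fderiv ℝ f p (1, 0)) p.1 :=
  hf.hasFDerivAt.comp_hasDerivAt p.1
    ((hasDerivAt_id p.1).prodMk (hasDerivAt_const p.1 p.2))

theorem hasDerivAt_snd_slice (hf : DifferentiableAt ℝ f p) :
    HasDerivAt (fun t => f (p.1, t)) (fderiv ℝ f p (0, 1)) p.2 :=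
  hf.hasFDerivAt.comp_hasDerivAt p.2
    ((hasDerivAt_const p.2 p.1).prodMk (hasDerivAt_id p.2))

theorem px_eq_fderiv (hf : DifferentiableAt ℝ f p) : px f p = fderiv ℝ f p (1, 0) :=
  (hasDerivAt_fst_slice hf).deriv

theorem py_eq_fderiv (hf : DifferentiableAt ℝ f p) : py f p = fderiv ℝ f p (0, 1) :=
  (hasDerivAt_snd_slice hf).deriv

theorem DifferentiableAt.hasDerivAt_px (hf : DifferentiableAt ℝ f p) :
    HasDerivAt (fun t => f (t, p.2)) (px f p) p.1 :=
  px_eq_fderiv hf ▸ hasDerivAt_fst_slice hf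

theorem DifferentiableAt.hasDerivAt_py (hf : DifferentiableAt ℝ f p) :
    HasDerivAt (fun t => f (p.1, t)) (py f p) p.2 :=
  py_eq_fderiv hf ▸ hasDerivAt_snd_slice hf

theorem ContDiffOn.hasDerivAt_px (hf : ContDiffOn ℝ n f Ω) (hΩ : IsOpen Ω) (hp : p ∈ Ω)
    (hn : n ≠ 0 := by simp) : HasDerivAt (fun t => f (t, p.2)) (px f p) p.1 :=
  ((hf.contDiffAt (hΩ.mem_nhds hp)).differentiableAt hn).hasDerivAt_px

theorem ContDiffOn.hasDerivAt_py (hf : ContDiffOn ℝ n f Ω) (hΩ : IsOpen Ω) (hp : p ∈ Ω)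
    (hn : n ≠ 0 := by simp) : HasDerivAt (fun t => f (p.1, t)) (py f p) p.2 :=
  ((hf.contDiffAt (hΩ.mem_nhds hp)).differentiableAt hn).hasDerivAt_py

theorem ContDiffOn.px_of_isOpen (hf : ContDiffOn ℝ (n + 1) f Ω) (hΩ : IsOpen Ω) :
    ContDiffOn ℝ n (px f) Ω := by
  obtain ⟨hdiff, -, hf'⟩ := (contDiffOn_succ_iff_fderiv_of_isOpen hΩ).1 hf
  exact (hf'.clm_apply contDiffOn_const).congr fun z hz =>
    px_eq_fderiv (hdiff.differentiableAt (hΩ.mem_nhds hz))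

theorem ContDiffOn.py_of_isOpen (hf : ContDiffOn ℝ (n + 1) f Ω) (hΩ : IsOpen Ω) :
    ContDiffOn ℝ n (py f) Ω := by
  obtain ⟨hdiff, -, hf'⟩ := (contDiffOn_succ_iff_fderiv_of_isOpen hΩ).1 hf
  exact (hf'.clm_apply contDiffOn_const).congr fun z hz =>
    py_eq_fderiv (hdiff.differentiableAt (hΩ.mem_nhds hz))

theorem Filter.EventuallyEq.px_eq (h : u =ᶠ[𝓝 p] v) : px u p = px v p :=
  (h.comp_tendsto ((Continuous.prodMk_left p.2).tendsto' p.1 p rfl)).deriv_eq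

theorem Filter.EventuallyEq.py_eq (h : u =ᶠ[𝓝 p] v) : py u p = py v p :=
  (h.comp_tendsto ((Continuous.prodMk_right p.1).tendsto' p.2 p rfl)).deriv_eq

theorem px_py_comm (hf : ContDiffAt ℝ 2 f p) : px (py f) p = py (px f) p := by
  have hdiff : ∀ᶠ z in 𝓝 p, DifferentiableAt ℝ f z :=
    (hf.eventually (by simp)).mono fun z hz => hz.differentiableAt (by simp)
  have hdf : DifferentiableAt ℝ (fderiv ℝ f) p :=
    (hf.fderiv_right (m := 1) le_rfl).differentiableAt one_ne_zero
  have hline (w : ℝ × ℝ) : DifferentiableAt ℝ (fun z => fderiv ℝ f z w) p :=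
    hdf.clm_apply (differentiableAt_const w)
  have hpy : py f =ᶠ[𝓝 p] fun z => fderiv ℝ f z (0, 1) :=
    hdiff.mono fun z hz => py_eq_fderiv hz
  have hpx : px f =ᶠ[𝓝 p] fun z => fderiv ℝ f z (1, 0) :=
    hdiff.mono fun z hz => px_eq_fderiv hz
  rw [hpy.px_eq, hpx.py_eq, px_eq_fderiv (hline _), py_eq_fderiv (hline _),
    fderiv_clm_apply hdf (differentiableAt_const _),
    fderiv_clm_apply hdf (differentiableAt_const _)]
  simpa using hf.isSymmSndFDerivAt (by simp) (1, 0) (0, 1)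

theorem ContDiffOn.px_py_comm (hf : ContDiffOn ℝ n f Ω) (hΩ : IsOpen Ω) (hp : p ∈ Ω)
    (hn : 2 ≤ n := by norm_cast) : px (py f) p = py (px f) p :=
  _root_.px_py_comm ((hf.contDiffAt (hΩ.mem_nhds hp)).of_le hn)

theorem eq_of_eqOn_of_hasDerivAt_fst {u' v' : ℝ} (hΩ : IsOpen Ω) (h : EqOn u v Ω)
    (hp : p ∈ Ω) (hu : HasDerivAt (fun t => u (t, p.2)) u' p.1)
    (hv : HasDerivAt (fun t => v (t, p.2)) v' p.1) : u' = v' :=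
  hu.unique <| hv.congr_of_eventuallyEq <|
    (eventuallyEq_of_mem (hΩ.mem_nhds hp) h).comp_tendsto
    ((Continuous.prodMk_left p.2).tendsto' p.1 p rfl)

theorem eq_of_eqOn_of_hasDerivAt_snd {u' v' : ℝ} (hΩ : IsOpen Ω) (h : EqOn u v Ω)
    (hp : p ∈ Ω) (hu : HasDerivAt (fun t => u (p.1, t)) u' p.2)
    (hv : HasDerivAt (fun t => v (p.1, t)) v' p.2) : u' = v' :=
  hu.unique <| hv.congr_of_eventuallyEq <|
    (eventuallyEq_of_mem (hΩ.mem_nhds hp) h).comp_tendsto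
    ((Continuous.prodMk_right p.1).tendsto' p.2 p rfl)

end PartialDerivatives

theorem deriv_eq_of_quadratic {A : ℝ → ℝ} {a a₀ : ℝ} (hA : ∀ x, A x = a * x ^ 2 + a₀) :
    deriv A = fun x => 2 * a * x := by
  funext x
  rw [funext hA]
  exact ((((hasDerivAt_id' x).fun_pow 2).const_mul a).add_const a₀).deriv.trans (by ring)

theorem deriv_deriv_eq_of_quadratic {A : ℝ → ℝ} {a a₀ : ℝ} (hA : ∀ x, A x = a * x ^ 2 + a₀) :
    deriv (deriv A) = fun _ => 2 * a := by
  rw [deriv_eq_of_quadratic hA]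
  funext x
  simp

theorem sub_mul_sq_eq_of_quadratic {A B : ℝ → ℝ} {a a₀ b b₀ x y q S T : ℝ}
    (hA : ∀ x, A x = a * x ^ 2 + a₀) (hB : ∀ y, B y = b * y ^ 2 + b₀) (hq : q ≠ 0)
    (h : deriv (deriv A) x - S / q ^ 2 * deriv A x = deriv (deriv B) y - T / q ^ 2 * deriv B y) :
    (a - b) * q ^ 2 = a * x * S - b * y * T := by
  rw [deriv_deriv_eq_of_quadratic hA, deriv_deriv_eq_of_quadratic hB, deriv_eq_of_quadratic hA,
    deriv_eq_of_quadratic hB] at h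
  field_simp at h
  linear_combination h

theorem eq_zero_of_hessian_relations {qx qy qxx qyy qxy T c : ℝ} (hqx : qx ≠ 0) (hqy : qy ≠ 0)
    (hxx : qxx * T = c * qx ^ 2) (hyy : qyy * T = -(c * qy ^ 2)) (hdet : qxx * qyy = qxy ^ 2) :
    c = 0 := by
  have hsum : (c * qx * qy) ^ 2 + (qxy * T) ^ 2 = 0 := by
    linear_combination qyy * T * hxx + c * qx ^ 2 * hyy - T ^ 2 * hdet
  obtain ⟨h, -⟩ := (add_eq_zero_iff_of_nonneg (sq_nonneg _) (sq_nonneg _)).1 hsum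
  simpa [hqx, hqy] using h

structure ReducedSolitonEqns (Ω : Set (ℝ × ℝ)) (q Sx Sy : ℝ × ℝ → ℝ) : Prop where
  isOpen : IsOpen Ω
  smooth_q : ContDiffOn ℝ ∞ q Ω
  smooth_Sx : ContDiffOn ℝ ∞ Sx Ω
  smooth_Sy : ContDiffOn ℝ ∞ Sy Ω
  e1 : ∀ p ∈ Ω, py Sx p + px Sy p = 4 * px q p * py q p
  e2 : ∀ p ∈ Ω, px Sx p = 2 * px q p ^ 2
  e3 : ∀ p ∈ Ω, py Sy p = 2 * py q p ^ 2

namespace ReducedSolitonEqns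

variable {Ω : Set (ℝ × ℝ)} {q Sx Sy : ℝ × ℝ → ℝ} {p : ℝ × ℝ}

theorem contDiffOn_px_q (hS : ReducedSolitonEqns Ω q Sx Sy) : ContDiffOn ℝ ∞ (px q) Ω :=
  hS.smooth_q.px_of_isOpen hS.isOpen

theorem contDiffOn_py_q (hS : ReducedSolitonEqns Ω q Sx Sy) : ContDiffOn ℝ ∞ (py q) Ω :=
  hS.smooth_q.py_of_isOpen hS.isOpen

theorem contDiffOn_px_Sy (hS : ReducedSolitonEqns Ω q Sx Sy) : ContDiffOn ℝ ∞ (px Sy) Ω :=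
  hS.smooth_Sy.px_of_isOpen hS.isOpen

theorem px_px_Sy (hS : ReducedSolitonEqns Ω q Sx Sy) (hp : p ∈ Ω) :
    px (px Sy) p = 4 * px (px q) p * py q p := by
  obtain ⟨x, y⟩ := p
  have hΩ := hS.isOpen
  have hqx := hS.contDiffOn_px_q
  have hqy := hS.contDiffOn_py_q
  have hSxx : ContDiffOn ℝ ∞ (px Sx) Ω := hS.smooth_Sx.px_of_isOpen hΩ
  have hSxy : ContDiffOn ℝ ∞ (py Sx) Ω := hS.smooth_Sx.py_of_isOpen hΩ
  have hR := hS.contDiffOn_px_Sy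
  have e1_x := eq_of_eqOn_of_hasDerivAt_fst hΩ hS.e1 hp
    ((hSxy.hasDerivAt_px hΩ hp).fun_add (hR.hasDerivAt_px hΩ hp))
    (((hqx.hasDerivAt_px hΩ hp).const_mul 4).fun_mul (hqy.hasDerivAt_px hΩ hp))
  have e2_y := eq_of_eqOn_of_hasDerivAt_snd hΩ hS.e2 hp
    (hSxx.hasDerivAt_py hΩ hp) (((hqx.hasDerivAt_py hΩ hp).fun_pow 2).const_mul 2)
  rw [hS.smooth_Sx.px_py_comm hΩ hp, hS.smooth_q.px_py_comm hΩ hp] at e1_x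
  linear_combination e1_x - e2_y

theorem py_px_Sy (hS : ReducedSolitonEqns Ω q Sx Sy) (hp : p ∈ Ω) :
    py (px Sy) p = 4 * py q p * py (px q) p := by
  obtain ⟨x, y⟩ := p
  have hΩ := hS.isOpen
  have hqy := hS.contDiffOn_py_q
  have hSyy : ContDiffOn ℝ ∞ (py Sy) Ω := hS.smooth_Sy.py_of_isOpen hΩ
  have e3_x := eq_of_eqOn_of_hasDerivAt_fst hΩ hS.e3 hp
    (hSyy.hasDerivAt_px hΩ hp) (((hqy.hasDerivAt_px hΩ hp).fun_pow 2).const_mul 2)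
  rw [hS.smooth_Sy.px_py_comm hΩ hp, hS.smooth_q.px_py_comm hΩ hp] at e3_x
  linear_combination e3_x

theorem px_px_q_mul_py_py_q (hS : ReducedSolitonEqns Ω q Sx Sy) (hp : p ∈ Ω) :
    px (px q) p * py (py q) p = py (px q) p ^ 2 := by
  obtain ⟨x, y⟩ := p
  have hΩ := hS.isOpen
  have hqx := hS.contDiffOn_px_q
  have hqy := hS.contDiffOn_py_q
  have hqxx : ContDiffOn ℝ ∞ (px (px q)) Ω := hqx.px_of_isOpen hΩ
  have hqxy : ContDiffOn ℝ ∞ (py (px q)) Ω := hqx.py_of_isOpen hΩ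
  have hR := hS.contDiffOn_px_Sy
  have hRx : ContDiffOn ℝ ∞ (px (px Sy)) Ω := hR.px_of_isOpen hΩ
  have hRy : ContDiffOn ℝ ∞ (py (px Sy)) Ω := hR.py_of_isOpen hΩ
  have hxx_y := eq_of_eqOn_of_hasDerivAt_snd hΩ (fun _ hz => hS.px_px_Sy hz) hp
    (hRx.hasDerivAt_py hΩ hp)
    (((hqxx.hasDerivAt_py hΩ hp).const_mul 4).fun_mul (hqy.hasDerivAt_py hΩ hp))
  have hxy_x := eq_of_eqOn_of_hasDerivAt_fst hΩ (fun _ hz => hS.py_px_Sy hz) hp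
    (hRy.hasDerivAt_px hΩ hp)
    (((hqy.hasDerivAt_px hΩ hp).const_mul 4).fun_mul (hqxy.hasDerivAt_px hΩ hp))
  rw [hR.px_py_comm hΩ hp, hqx.px_py_comm hΩ hp, hS.smooth_q.px_py_comm hΩ hp] at hxy_x
  linear_combination (hxy_x - hxx_y) / 4

variable {a b : ℝ}

theorem relation_px (hS : ReducedSolitonEqns Ω q Sx Sy)
    (hrel : ∀ z ∈ Ω, (a - b) * q z ^ 2 = a * z.1 * Sx z - b * z.2 * Sy z) (hp : p ∈ Ω) :
    2 * (a - b) * q p * px q p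
      = a * Sx p + 2 * a * p.1 * px q p ^ 2 - b * p.2 * px Sy p := by
  obtain ⟨x, y⟩ := p
  have hΩ := hS.isOpen
  have hrel_x := eq_of_eqOn_of_hasDerivAt_fst hΩ hrel hp
    (((hS.smooth_q.hasDerivAt_px hΩ hp).fun_pow 2).const_mul (a - b))
    ((((hasDerivAt_id' x).const_mul a).fun_mul (hS.smooth_Sx.hasDerivAt_px hΩ hp)).fun_sub
      ((hS.smooth_Sy.hasDerivAt_px hΩ hp).const_mul (b * y)))
  linear_combination hrel_x + a * x * hS.e2 (x, y) hp

theorem px_px_q_mul_eq (hS : ReducedSolitonEqns Ω q Sx Sy)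
    (hrel : ∀ z ∈ Ω, (a - b) * q z ^ 2 = a * z.1 * Sx z - b * z.2 * Sy z) (hp : p ∈ Ω) :
    px (px q) p * ((a - b) * q p - 2 * a * p.1 * px q p + 2 * b * p.2 * py q p)
      = (a + b) * px q p ^ 2 := by
  obtain ⟨x, y⟩ := p
  have hΩ := hS.isOpen
  have hqx := hS.contDiffOn_px_q
  have hR := hS.contDiffOn_px_Sy
  have hD_x := eq_of_eqOn_of_hasDerivAt_fst hΩ (fun _ hz => hS.relation_px hrel hz) hp
    (((hS.smooth_q.hasDerivAt_px hΩ hp).const_mul (2 * (a - b))).fun_mul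
      (hqx.hasDerivAt_px hΩ hp))
    (((hS.smooth_Sx.hasDerivAt_px hΩ hp).const_mul a |>.fun_add
      (((hasDerivAt_id' x).const_mul (2 * a)).fun_mul ((hqx.hasDerivAt_px hΩ hp).fun_pow 2)))
      |>.fun_sub ((hR.hasDerivAt_px hΩ hp).const_mul (b * y)))
  linear_combination hD_x / 2 + a / 2 * hS.e2 (x, y) hp - b * y / 2 * hS.px_px_Sy hp

theorem relation_py (hS : ReducedSolitonEqns Ω q Sx Sy)
    (hrel : ∀ z ∈ Ω, (a - b) * q z ^ 2 = a * z.1 * Sx z - b * z.2 * Sy z) (hp : p ∈ Ω) :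
    2 * (a - b) * q p * py q p
      = a * p.1 * (4 * px q p * py q p - px Sy p) - b * Sy p - 2 * b * p.2 * py q p ^ 2 := by
  obtain ⟨x, y⟩ := p
  have hΩ := hS.isOpen
  have hrel_y := eq_of_eqOn_of_hasDerivAt_snd hΩ hrel hp
    (((hS.smooth_q.hasDerivAt_py hΩ hp).fun_pow 2).const_mul (a - b))
    (((hS.smooth_Sx.hasDerivAt_py hΩ hp).const_mul (a * x)).fun_sub
      (((hasDerivAt_id' y).const_mul b).fun_mul (hS.smooth_Sy.hasDerivAt_py hΩ hp)))
  linear_combination hrel_y + a * x * hS.e1 (x, y) hp - b * y * hS.e3 (x, y) hp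

theorem py_py_q_mul_eq (hS : ReducedSolitonEqns Ω q Sx Sy)
    (hrel : ∀ z ∈ Ω, (a - b) * q z ^ 2 = a * z.1 * Sx z - b * z.2 * Sy z) (hp : p ∈ Ω) :
    py (py q) p * ((a - b) * q p - 2 * a * p.1 * px q p + 2 * b * p.2 * py q p)
      = -((a + b) * py q p ^ 2) := by
  obtain ⟨x, y⟩ := p
  have hΩ := hS.isOpen
  have hqx := hS.contDiffOn_px_q
  have hqy := hS.contDiffOn_py_q
  have hR := hS.contDiffOn_px_Sy
  have hD_y := eq_of_eqOn_of_hasDerivAt_snd hΩ (fun _ hz => hS.relation_py hrel hz) hp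
    (((hS.smooth_q.hasDerivAt_py hΩ hp).const_mul (2 * (a - b))).fun_mul
      (hqy.hasDerivAt_py hΩ hp))
    (((((hqx.hasDerivAt_py hΩ hp).const_mul 4).fun_mul (hqy.hasDerivAt_py hΩ hp)).fun_sub
        (hR.hasDerivAt_py hΩ hp)).const_mul (a * x) |>.fun_sub
      ((hS.smooth_Sy.hasDerivAt_py hΩ hp).const_mul b) |>.fun_sub
      (((hasDerivAt_id' y).const_mul (2 * b)).fun_mul ((hqy.hasDerivAt_py hΩ hp).fun_pow 2)))
  linear_combination hD_y / 2 - a * x / 2 * hS.py_px_Sy hp - b / 2 * hS.e3 (x, y) hp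

end ReducedSolitonEqns

theorem opposite_curvatures_general
    (Ω : Set (ℝ × ℝ)) (hΩ : IsOpen Ω) (hconn : IsConnected Ω)
    (q Sx Sy : ℝ × ℝ → ℝ) (A B : ℝ → ℝ) (a a₀ b b₀ : ℝ)
    (hq : ContDiffOn ℝ (⊤ : ℕ∞) q Ω)
    (hq0 : ∀ p ∈ Ω, q p ≠ 0)
    (hqx : ∀ p ∈ Ω, px q p ≠ 0)
    (hqy : ∀ p ∈ Ω, py q p ≠ 0)
    (hA : ∀ x : ℝ, A x = a * x ^ 2 + a₀)
    (hB : ∀ y : ℝ, B y = b * y ^ 2 + b₀)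
    (hSx : ContDiffOn ℝ (⊤ : ℕ∞) Sx Ω)
    (hSy : ContDiffOn ℝ (⊤ : ℕ∞) Sy Ω)
    (hE1 : ∀ p ∈ Ω, py Sx p + px Sy p = 4 * px q p * py q p)
    (hE2 : ∀ p ∈ Ω, px Sx p = 2 * (px q p) ^ 2)
    (hE3 : ∀ p ∈ Ω, py Sy p = 2 * (py q p) ^ 2)
    (hE4 : ∀ p ∈ Ω,
      deriv (deriv A) p.1 - Sx p / (q p) ^ 2 * deriv A p.1 =
        deriv (deriv B) p.2 - Sy p / (q p) ^ 2 * deriv B p.2) :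
    a + b = 0 := by
  have hS : ReducedSolitonEqns Ω q Sx Sy := ⟨hΩ, hq, hSx, hSy, hE1, hE2, hE3⟩
  have hrel (z : ℝ × ℝ) (hz : z ∈ Ω) : (a - b) * q z ^ 2 = a * z.1 * Sx z - b * z.2 * Sy z :=
    sub_mul_sq_eq_of_quadratic hA hB (hq0 z hz) (hE4 z hz)
  obtain ⟨p, hp⟩ := hconn.nonempty
  exact eq_zero_of_hessian_relations (hqx p hp) (hqy p hp) (hS.px_px_q_mul_eq hrel hp)
    (hS.py_py_q_mul_eq hrel hp) (hS.px_px_q_mul_py_py_q hp)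

/-- if both surface factors have constant curvature
(`A = a x² + a₀`, `B = b y² + b₀`) and the full reduced soliton system holds with `q`
and all its first and second partials nowhere vanishing, then `a + b = 0`. -/
theorem opposite_curvatures
    (Ω : Set (ℝ × ℝ)) (hΩ : IsOpen Ω) (hconn : IsConnected Ω)
    (q Sx Sy : ℝ × ℝ → ℝ) (A B : ℝ → ℝ) (a a₀ b b₀ lam : ℝ)
    (hq : ContDiffOn ℝ (⊤ : ℕ∞) q Ω)
    (hq0 : ∀ p ∈ Ω, q p ≠ 0)
    (hqx : ∀ p ∈ Ω, px q p ≠ 0)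
    (hqy : ∀ p ∈ Ω, py q p ≠ 0)
    (hqxx : ∀ p ∈ Ω, px (px q) p ≠ 0)
    (hqyy : ∀ p ∈ Ω, py (py q) p ≠ 0)
    (hqxy : ∀ p ∈ Ω, py (px q) p ≠ 0)
    (hA : ∀ x : ℝ, A x = a * x ^ 2 + a₀)
    (hB : ∀ y : ℝ, B y = b * y ^ 2 + b₀)
    (hSx : ContDiffOn ℝ (⊤ : ℕ∞) Sx Ω)
    (hSy : ContDiffOn ℝ (⊤ : ℕ∞) Sy Ω)
    (hE1 : ∀ p ∈ Ω, py Sx p + px Sy p = 4 * px q p * py q p)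
    (hE2 : ∀ p ∈ Ω, px Sx p = 2 * (px q p) ^ 2)
    (hE3 : ∀ p ∈ Ω, py Sy p = 2 * (py q p) ^ 2)
    (hE4 : ∀ p ∈ Ω,
      deriv (deriv A) p.1 - Sx p / (q p) ^ 2 * deriv A p.1 =
        deriv (deriv B) p.2 - Sy p / (q p) ^ 2 * deriv B p.2)
    (hE5 : ∀ p ∈ Ω,
      -(lam / (q p) ^ 2) =
        (1 / 2) * (deriv (deriv A) p.1 - Sx p / (q p) ^ 2 * deriv A p.1)
        - (px q p * deriv A p.1 + px (px q) p * A p.1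
            + py q p * deriv B p.2 + py (py q) p * B p.2) / q p
        + ((px q p) ^ 2 * A p.1 + (py q p) ^ 2 * B p.2) / (q p) ^ 2
        + (Sx p * px q p * A p.1 + Sy p * py q p * B p.2) / (q p) ^ 3) :
    a + b = 0 :=
  opposite_curvatures_general Ω hΩ hconn q Sx Sy A B a a₀ b b₀ hq hq0 hqx hqy hA hB hSx hSy hE1 hE2
    hE3 hE4
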